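/- For each integer k ≥ 1 define ψ_k : [−1,1] → ℝ by ψ_k(σ) = cos(kπσ/2) if k is odd and ψ_k(σ) = sin(kπσ/2) if k is even. Let g : ℝ → ℝ be smooth with compact support, let k ≥ 1 be an integer, and define f(y,σ) = g(y)·(ψ_{k+2}(σ) − ψ_k(σ)) on Ω = ℝ × [−1,1]. Then 2 ∫_Ω (−Δf)·( y ∂_y f + σ ∂_σ f + f ) dy dσ = 4 ∫_ℝ g′(y)² dy − π² k (k+2) ∫_ℝ g(y)² dy, where Δf = ∂_y²f + ∂_σ²f. -/

import Mathlib

open MeasureTheory Real intervalIntegral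

/-- The Dirichlet eigenfunctions of `−d²/dσ²` on `[−1,1]`:
`ψ_k(σ) = cos(kπσ/2)` for odd `k`, `ψ_k(σ) = sin(kπσ/2)` for even `k`. -/
noncomputable def psi (k : ℕ) (σ : ℝ) : ℝ :=
  if Odd k then Real.cos (k * Real.pi * σ / 2) else Real.sin (k * Real.pi * σ / 2)

/-- Partial derivative in the first (longitudinal) variable `y`. -/
noncomputable def dY (f : ℝ → ℝ → ℝ) : ℝ → ℝ → ℝ :=
  fun y σ => deriv (fun y' => f y' σ) y

/-- Partial derivative in the second (transverse) variable `σ`. -/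
noncomputable def dS (f : ℝ → ℝ → ℝ) : ℝ → ℝ → ℝ :=
  fun y σ => deriv (fun σ' => f y σ') σ

lemma int_cos_sq (c : ℝ) (hc : c ≠ 0) (h : Real.sin c * Real.cos c = 0) :
    ∫ σ in (-1:ℝ)..1, Real.cos (c*σ)^2 = 1 := by
  have key : ∀ σ : ℝ, HasDerivAt (fun x => x/2 + Real.sin (c*x) * Real.cos (c*x) / (2*c))
      (Real.cos (c*σ)^2) σ := by
    intro σ
    have hc1 : HasDerivAt (fun x : ℝ => c * x) c σ := by
      simpa using (hasDerivAt_id σ).const_mul c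
    have hs : HasDerivAt (fun x => Real.sin (c*x)) (Real.cos (c*σ) * c) σ := hc1.sin
    have hco : HasDerivAt (fun x => Real.cos (c*x)) (-Real.sin (c*σ) * c) σ := hc1.cos
    have := ((hasDerivAt_id σ).div_const 2).add (((hs.mul hco)).div_const (2*c))
    refine this.congr_deriv (Eq.symm ?_)
    have hsin := Real.sin_sq_add_cos_sq (c*σ)
    field_simp
    linear_combination hsin
  rw [intervalIntegral.integral_eq_sub_of_hasDerivAt (fun σ _ => key σ)
    (by apply Continuous.intervalIntegrable; fun_prop)]
  simp [Real.sin_neg, Real.cos_neg, mul_comm]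
  field_simp
  linear_combination 2 * h

lemma int_sin_sq (c : ℝ) (hc : c ≠ 0) (h : Real.sin c * Real.cos c = 0) :
    ∫ σ in (-1:ℝ)..1, Real.sin (c*σ)^2 = 1 := by
  have h2 : ∀ σ:ℝ, Real.sin (c*σ)^2 = 1 - Real.cos (c*σ)^2 := by
    intro σ; nlinarith [Real.sin_sq_add_cos_sq (c*σ)]
  rw [intervalIntegral.integral_congr (fun σ _ => h2 σ),
    intervalIntegral.integral_sub (by apply Continuous.intervalIntegrable; fun_prop)
      (by apply Continuous.intervalIntegrable; fun_prop),
    int_cos_sq c hc h]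
  simp

lemma int_cos_cross (a : ℝ) (ha : 0 < a) (h : Real.sin a * Real.cos a = 0) :
    ∫ σ in (-1:ℝ)..1, Real.cos (a*σ) * Real.cos ((a+Real.pi)*σ) = 0 := by
  set b := a + Real.pi with hb
  have hab : a^2 - b^2 ≠ 0 := by
    have : b > a := by simp [hb, Real.pi_pos]
    nlinarith [Real.pi_pos]
  have key : ∀ σ : ℝ, HasDerivAt
      (fun x => (a * Real.sin (a*x) * Real.cos (b*x) - b * Real.cos (a*x) * Real.sin (b*x)) / (a^2-b^2))
      (Real.cos (a*σ) * Real.cos (b*σ)) σ := by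
    intro σ
    have ha1 : HasDerivAt (fun x : ℝ => a * x) a σ := by simpa using (hasDerivAt_id σ).const_mul a
    have hb1 : HasDerivAt (fun x : ℝ => b * x) b σ := by simpa using (hasDerivAt_id σ).const_mul b
    have hsa : HasDerivAt (fun x => Real.sin (a*x)) (Real.cos (a*σ) * a) σ := ha1.sin
    have hca : HasDerivAt (fun x => Real.cos (a*x)) (-Real.sin (a*σ) * a) σ := ha1.cos
    have hsb : HasDerivAt (fun x => Real.sin (b*x)) (Real.cos (b*σ) * b) σ := hb1.sin
    have hcb : HasDerivAt (fun x => Real.cos (b*x)) (-Real.sin (b*σ) * b) σ := hb1.cos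
    have := (((hsa.const_mul a).mul hcb).sub ((hca.const_mul b).mul hsb)).div_const (a^2-b^2)
    refine this.congr_deriv (Eq.symm ?_)
    field_simp
    ring
  rw [intervalIntegral.integral_eq_sub_of_hasDerivAt (fun σ _ => key σ)
    (by apply Continuous.intervalIntegrable; fun_prop)]
  have hsb : Real.sin b = -Real.sin a := by simp [hb, Real.sin_add]
  have hcb : Real.cos b = -Real.cos a := by simp [hb, Real.cos_add]
  simp only [mul_one, mul_neg_one, Real.sin_neg, Real.cos_neg, hsb, hcb]
  field_simp
  linear_combination (2*Real.pi) * h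

lemma int_sin_cross (a : ℝ) (ha : 0 < a) (h : Real.sin a * Real.cos a = 0) :
    ∫ σ in (-1:ℝ)..1, Real.sin (a*σ) * Real.sin ((a+Real.pi)*σ) = 0 := by
  set b := a + Real.pi with hb
  have hab : a^2 - b^2 ≠ 0 := by
    have : b > a := by simp [hb, Real.pi_pos]
    nlinarith [Real.pi_pos]
  have key : ∀ σ : ℝ, HasDerivAt
      (fun x => (b * Real.sin (a*x) * Real.cos (b*x) - a * Real.cos (a*x) * Real.sin (b*x)) / (a^2-b^2))
      (Real.sin (a*σ) * Real.sin (b*σ)) σ := by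
    intro σ
    have ha1 : HasDerivAt (fun x : ℝ => a * x) a σ := by simpa using (hasDerivAt_id σ).const_mul a
    have hb1 : HasDerivAt (fun x : ℝ => b * x) b σ := by simpa using (hasDerivAt_id σ).const_mul b
    have hsa : HasDerivAt (fun x => Real.sin (a*x)) (Real.cos (a*σ) * a) σ := ha1.sin
    have hca : HasDerivAt (fun x => Real.cos (a*x)) (-Real.sin (a*σ) * a) σ := ha1.cos
    have hsb : HasDerivAt (fun x => Real.sin (b*x)) (Real.cos (b*σ) * b) σ := hb1.sin
    have hcb : HasDerivAt (fun x => Real.cos (b*x)) (-Real.sin (b*σ) * b) σ := hb1.cos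
    have := (((hsa.const_mul b).mul hcb).sub ((hca.const_mul a).mul hsb)).div_const (a^2-b^2)
    refine this.congr_deriv (Eq.symm ?_)
    field_simp
    ring
  rw [intervalIntegral.integral_eq_sub_of_hasDerivAt (fun σ _ => key σ)
    (by apply Continuous.intervalIntegrable; fun_prop)]
  have hsb : Real.sin b = -Real.sin a := by simp [hb, Real.sin_add]
  have hcb : Real.cos b = -Real.cos a := by simp [hb, Real.cos_add]
  simp only [mul_one, mul_neg_one, Real.sin_neg, Real.cos_neg, hsb, hcb]
  field_simp
  linear_combination (-2*Real.pi) * h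

noncomputable def dpsi (k : ℕ) (σ : ℝ) : ℝ :=
  if Odd k then -(k * Real.pi / 2) * Real.sin (k * Real.pi * σ / 2)
  else (k * Real.pi / 2) * Real.cos (k * Real.pi * σ / 2)

lemma sincos (k : ℕ) : Real.sin (k*Real.pi/2) * Real.cos (k*Real.pi/2) = 0 := by
  have h2 : (2:ℝ) * (k*Real.pi/2) = k*Real.pi := by ring
  have := Real.sin_two_mul (k*Real.pi/2)
  rw [h2, Real.sin_nat_mul_pi] at this
  linarith

lemma cos_odd {k : ℕ} (hk : Odd k) : Real.cos (k*Real.pi/2) = 0 := by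
  obtain ⟨m, rfl⟩ := hk
  have : ((2*m+1 : ℕ) : ℝ) * Real.pi / 2 = m*Real.pi + Real.pi/2 := by push_cast; ring
  rw [this, Real.cos_add, Real.cos_pi_div_two, Real.sin_pi_div_two, Real.sin_nat_mul_pi]
  ring

lemma sin_even {k : ℕ} (hk : ¬ Odd k) : Real.sin (k*Real.pi/2) = 0 := by
  obtain ⟨m, hm⟩ := Nat.not_odd_iff_even.mp hk
  subst hm
  have : ((m+m : ℕ) : ℝ) * Real.pi / 2 = m*Real.pi := by push_cast; ring
  rw [this, Real.sin_nat_mul_pi]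

lemma psi_one (k : ℕ) : psi k 1 = 0 := by
  unfold psi
  split_ifs with h
  · simpa using cos_odd h
  · simpa using sin_even h

lemma psi_neg_one (k : ℕ) : psi k (-1) = 0 := by
  unfold psi
  split_ifs with h
  · rw [show (k:ℝ) * Real.pi * (-1) / 2 = -(k*Real.pi/2) by ring, Real.cos_neg]
    exact cos_odd h
  · rw [show (k:ℝ) * Real.pi * (-1) / 2 = -(k*Real.pi/2) by ring, Real.sin_neg]
    simp [sin_even h]

lemma psi_cont (k : ℕ) : Continuous (psi k) := by
  unfold psi; split_ifs <;> fun_prop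

lemma dpsi_cont (k : ℕ) : Continuous (dpsi k) := by
  unfold dpsi; split_ifs <;> fun_prop

lemma hasDerivAt_psi (k : ℕ) (σ : ℝ) : HasDerivAt (psi k) (dpsi k σ) σ := by
  have harg : ∀ x : ℝ, (k:ℝ) * Real.pi * x / 2 = (k*Real.pi/2) * x := fun x => by ring
  have hl : HasDerivAt (fun x : ℝ => (k:ℝ) * Real.pi * x / 2) ((k:ℝ)*Real.pi/2) σ := by
    simpa using (((hasDerivAt_id σ).const_mul ((k:ℝ) * Real.pi)).div_const 2)
  unfold psi dpsi
  split_ifs with h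
  · simpa [mul_comm] using hl.cos
  · simpa [mul_comm] using hl.sin

lemma hasDerivAt_dpsi (k : ℕ) (σ : ℝ) :
    HasDerivAt (dpsi k) (-((k:ℝ)*Real.pi/2)^2 * psi k σ) σ := by
  have hl : HasDerivAt (fun x : ℝ => (k:ℝ) * Real.pi * x / 2) ((k:ℝ)*Real.pi/2) σ := by
    simpa using (((hasDerivAt_id σ).const_mul ((k:ℝ) * Real.pi)).div_const 2)
  unfold dpsi psi
  split_ifs with h
  · have := hl.sin.const_mul (-((k:ℝ)*Real.pi/2))
    refine this.congr_deriv (Eq.symm ?_)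
    ring
  · have := hl.cos.const_mul ((k:ℝ)*Real.pi/2)
    refine this.congr_deriv (Eq.symm ?_)
    ring

lemma kpi_pos {k : ℕ} (hk : 1 ≤ k) : (0:ℝ) < (k:ℝ) * Real.pi / 2 := by
  have h1 : (1:ℝ) ≤ (k:ℝ) := by exact_mod_cast hk
  have := Real.pi_pos
  nlinarith

lemma odd_iff_add_two (k : ℕ) : Odd (k+2) ↔ Odd k := by
  simp [Nat.odd_add]

lemma int_psi_sq (k : ℕ) (hk : 1 ≤ k) : ∫ σ in (-1:ℝ)..1, (psi k σ)^2 = 1 := by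
  by_cases h : Odd k
  · simp only [psi, h, if_true]
    rw [intervalIntegral.integral_congr
      (g := fun σ => Real.cos (((k:ℝ)*Real.pi/2)*σ)^2)
      (fun σ _ => by rw [show (k:ℝ)*Real.pi*σ/2 = ((k:ℝ)*Real.pi/2)*σ by ring])]
    exact int_cos_sq _ (ne_of_gt (kpi_pos hk)) (sincos k)
  · simp only [psi, h, if_false]
    rw [intervalIntegral.integral_congr
      (g := fun σ => Real.sin (((k:ℝ)*Real.pi/2)*σ)^2)
      (fun σ _ => by rw [show (k:ℝ)*Real.pi*σ/2 = ((k:ℝ)*Real.pi/2)*σ by ring])]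
    exact int_sin_sq _ (ne_of_gt (kpi_pos hk)) (sincos k)

lemma int_psi_cross (k : ℕ) (hk : 1 ≤ k) :
    ∫ σ in (-1:ℝ)..1, psi k σ * psi (k+2) σ = 0 := by
  have h2 := odd_iff_add_two k
  by_cases h : Odd k
  · have hyes : Odd (k+2) := h2.mpr h
    simp only [psi, h, hyes, if_true]
    rw [intervalIntegral.integral_congr
      (g := fun σ => Real.cos (((k:ℝ)*Real.pi/2)*σ) * Real.cos (((k:ℝ)*Real.pi/2 + Real.pi)*σ))
      (fun σ _ => by
        rw [show (k:ℝ)*Real.pi*σ/2 = ((k:ℝ)*Real.pi/2)*σ by ring,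
          show ((k+2:ℕ):ℝ)*Real.pi*σ/2 = ((k:ℝ)*Real.pi/2 + Real.pi)*σ by push_cast; ring])]
    exact int_cos_cross _ (kpi_pos hk) (sincos k)
  · have hno : ¬ Odd (k+2) := fun hh => h (h2.mp hh)
    simp only [psi, h, hno, if_false]
    rw [intervalIntegral.integral_congr
      (g := fun σ => Real.sin (((k:ℝ)*Real.pi/2)*σ) * Real.sin (((k:ℝ)*Real.pi/2 + Real.pi)*σ))
      (fun σ _ => by
        rw [show (k:ℝ)*Real.pi*σ/2 = ((k:ℝ)*Real.pi/2)*σ by ring,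
          show ((k+2:ℕ):ℝ)*Real.pi*σ/2 = ((k:ℝ)*Real.pi/2 + Real.pi)*σ by push_cast; ring])]
    exact int_sin_cross _ (kpi_pos hk) (sincos k)

lemma int_dpsi_sq (k : ℕ) (hk : 1 ≤ k) :
    ∫ σ in (-1:ℝ)..1, (dpsi k σ)^2 = ((k:ℝ)*Real.pi/2)^2 := by
  by_cases h : Odd k
  · simp only [dpsi, h, if_true]
    rw [intervalIntegral.integral_congr
      (g := fun σ => ((k:ℝ)*Real.pi/2)^2 * Real.sin (((k:ℝ)*Real.pi/2)*σ)^2)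
      (fun σ _ => by
        rw [show (k:ℝ)*Real.pi*σ/2 = ((k:ℝ)*Real.pi/2)*σ by ring]; ring),
      intervalIntegral.integral_const_mul,
      int_sin_sq _ (ne_of_gt (kpi_pos hk)) (sincos k), mul_one]
  · simp only [dpsi, h, if_false]
    rw [intervalIntegral.integral_congr
      (g := fun σ => ((k:ℝ)*Real.pi/2)^2 * Real.cos (((k:ℝ)*Real.pi/2)*σ)^2)
      (fun σ _ => by
        rw [show (k:ℝ)*Real.pi*σ/2 = ((k:ℝ)*Real.pi/2)*σ by ring]; ring),
      intervalIntegral.integral_const_mul,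
      int_cos_sq _ (ne_of_gt (kpi_pos hk)) (sincos k), mul_one]

lemma int_dpsi_cross (k : ℕ) (hk : 1 ≤ k) :
    ∫ σ in (-1:ℝ)..1, dpsi k σ * dpsi (k+2) σ = 0 := by
  have h2 := odd_iff_add_two k
  by_cases h : Odd k
  · have hyes : Odd (k+2) := h2.mpr h
    simp only [dpsi, h, hyes, if_true]
    rw [intervalIntegral.integral_congr
      (g := fun σ => ((k:ℝ)*Real.pi/2 * (((k+2:ℕ):ℝ)*Real.pi/2)) *
        (Real.sin (((k:ℝ)*Real.pi/2)*σ) * Real.sin (((k:ℝ)*Real.pi/2 + Real.pi)*σ)))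
      (fun σ _ => by
        rw [show (k:ℝ)*Real.pi*σ/2 = ((k:ℝ)*Real.pi/2)*σ by ring,
          show ((k+2:ℕ):ℝ)*Real.pi*σ/2 = ((k:ℝ)*Real.pi/2 + Real.pi)*σ by push_cast; ring]
        ring),
      intervalIntegral.integral_const_mul,
      int_sin_cross _ (kpi_pos hk) (sincos k), mul_zero]
  · have hno : ¬ Odd (k+2) := fun hh => h (h2.mp hh)
    simp only [dpsi, h, hno, if_false]
    rw [intervalIntegral.integral_congr
      (g := fun σ => ((k:ℝ)*Real.pi/2 * (((k+2:ℕ):ℝ)*Real.pi/2)) *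
        (Real.cos (((k:ℝ)*Real.pi/2)*σ) * Real.cos (((k:ℝ)*Real.pi/2 + Real.pi)*σ)))
      (fun σ _ => by
        rw [show (k:ℝ)*Real.pi*σ/2 = ((k:ℝ)*Real.pi/2)*σ by ring,
          show ((k+2:ℕ):ℝ)*Real.pi*σ/2 = ((k:ℝ)*Real.pi/2 + Real.pi)*σ by push_cast; ring]
        ring),
      intervalIntegral.integral_const_mul,
      int_cos_cross _ (kpi_pos hk) (sincos k), mul_zero]

lemma dpsi_bdry_sq (k : ℕ) (s : ℝ) (hs : s = 1 ∨ s = -1) :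
    (dpsi (k+2) s - dpsi k s)^2 = ((k:ℝ)*Real.pi/2 + ((k+2:ℕ):ℝ)*Real.pi/2)^2 := by
  have h2 := odd_iff_add_two k
  have hpyth := Real.sin_sq_add_cos_sq ((k:ℝ)*Real.pi/2)
  have hb : ((k+2:ℕ):ℝ)*Real.pi/2 = (k:ℝ)*Real.pi/2 + Real.pi := by push_cast; ring
  rcases hs with rfl | rfl <;> by_cases h : Odd k
  · have hyes : Odd (k+2) := h2.mpr h
    simp only [dpsi, h, hyes, if_true]
    rw [show ((k+2:ℕ):ℝ)*Real.pi*1/2 = (k:ℝ)*Real.pi/2 + Real.pi by push_cast; ring,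
      show (k:ℝ)*Real.pi*1/2 = (k:ℝ)*Real.pi/2 by ring, hb, Real.sin_add_pi]
    have hc := cos_odd h
    have hcsq : Real.cos ((k:ℝ)*Real.pi/2)^2 = 0 := by rw [hc]; norm_num
    have hsq : Real.sin ((k:ℝ)*Real.pi/2)^2 = 1 := by linarith
    linear_combination (((k:ℝ)*Real.pi + Real.pi)^2) * hsq
  · have hno : ¬ Odd (k+2) := fun hh => h (h2.mp hh)
    simp only [dpsi, h, hno, if_false]
    rw [show ((k+2:ℕ):ℝ)*Real.pi*1/2 = (k:ℝ)*Real.pi/2 + Real.pi by push_cast; ring,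
      show (k:ℝ)*Real.pi*1/2 = (k:ℝ)*Real.pi/2 by ring, hb, Real.cos_add_pi]
    have hc := sin_even h
    have hssq : Real.sin ((k:ℝ)*Real.pi/2)^2 = 0 := by rw [hc]; norm_num
    have hsq : Real.cos ((k:ℝ)*Real.pi/2)^2 = 1 := by linarith
    linear_combination (((k:ℝ)*Real.pi + Real.pi)^2) * hsq
  · have hyes : Odd (k+2) := h2.mpr h
    simp only [dpsi, h, hyes, if_true]
    rw [show ((k+2:ℕ):ℝ)*Real.pi*(-1)/2 = -((k:ℝ)*Real.pi/2 + Real.pi) by push_cast; ring,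
      show (k:ℝ)*Real.pi*(-1)/2 = -((k:ℝ)*Real.pi/2) by ring, hb,
      Real.sin_neg, Real.sin_neg, Real.sin_add_pi]
    have hc := cos_odd h
    have hcsq : Real.cos ((k:ℝ)*Real.pi/2)^2 = 0 := by rw [hc]; norm_num
    have hsq : Real.sin ((k:ℝ)*Real.pi/2)^2 = 1 := by linarith
    linear_combination (((k:ℝ)*Real.pi + Real.pi)^2) * hsq
  · have hno : ¬ Odd (k+2) := fun hh => h (h2.mp hh)
    simp only [dpsi, h, hno, if_false]
    rw [show ((k+2:ℕ):ℝ)*Real.pi*(-1)/2 = -((k:ℝ)*Real.pi/2 + Real.pi) by push_cast; ring,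
      show (k:ℝ)*Real.pi*(-1)/2 = -((k:ℝ)*Real.pi/2) by ring, hb,
      Real.cos_neg, Real.cos_neg, Real.cos_add_pi]
    have hc := sin_even h
    have hssq : Real.sin ((k:ℝ)*Real.pi/2)^2 = 0 := by rw [hc]; norm_num
    have hsq : Real.cos ((k:ℝ)*Real.pi/2)^2 = 1 := by linarith
    linear_combination (((k:ℝ)*Real.pi + Real.pi)^2) * hsq

lemma int_phi_sq (k : ℕ) (hk : 1 ≤ k) :
    ∫ σ in (-1:ℝ)..1, (psi (k+2) σ - psi k σ)^2 = 2 := by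
  have c1 := psi_cont k
  have c2 := psi_cont (k+2)
  rw [intervalIntegral.integral_congr
    (g := fun σ => (psi (k+2) σ)^2 - 2*(psi k σ * psi (k+2) σ) + (psi k σ)^2)
    (fun σ _ => by ring),
    intervalIntegral.integral_add (by apply Continuous.intervalIntegrable; fun_prop)
      (by apply Continuous.intervalIntegrable; fun_prop),
    intervalIntegral.integral_sub (by apply Continuous.intervalIntegrable; fun_prop)
      (by apply Continuous.intervalIntegrable; fun_prop),
    intervalIntegral.integral_const_mul,
    int_psi_sq (k+2) (by omega), int_psi_sq k hk, int_psi_cross k hk]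
  ring

lemma int_dphi_sq (k : ℕ) (hk : 1 ≤ k) :
    ∫ σ in (-1:ℝ)..1, (dpsi (k+2) σ - dpsi k σ)^2
      = ((k:ℝ)*Real.pi/2)^2 + (((k+2:ℕ):ℝ)*Real.pi/2)^2 := by
  have c1 := dpsi_cont k
  have c2 := dpsi_cont (k+2)
  rw [intervalIntegral.integral_congr
    (g := fun σ => (dpsi (k+2) σ)^2 - 2*(dpsi k σ * dpsi (k+2) σ) + (dpsi k σ)^2)
    (fun σ _ => by ring),
    intervalIntegral.integral_add (by apply Continuous.intervalIntegrable; fun_prop)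
      (by apply Continuous.intervalIntegrable; fun_prop),
    intervalIntegral.integral_sub (by apply Continuous.intervalIntegrable; fun_prop)
      (by apply Continuous.intervalIntegrable; fun_prop),
    intervalIntegral.integral_const_mul,
    int_dpsi_sq (k+2) (by omega), int_dpsi_sq k hk, int_dpsi_cross k hk]
  ring

lemma int_phi_ddphi (k : ℕ) (hk : 1 ≤ k) :
    ∫ σ in (-1:ℝ)..1, (psi (k+2) σ - psi k σ) *
        (-(((k+2:ℕ):ℝ)*Real.pi/2)^2 * psi (k+2) σ + ((k:ℝ)*Real.pi/2)^2 * psi k σ)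
      = -(((k:ℝ)*Real.pi/2)^2 + (((k+2:ℕ):ℝ)*Real.pi/2)^2) := by
  have c1 := psi_cont k
  have c2 := psi_cont (k+2)
  set a := ((k:ℝ)*Real.pi/2) with ha
  set b := (((k+2:ℕ):ℝ)*Real.pi/2) with hb
  rw [intervalIntegral.integral_congr
    (g := fun σ => (-b^2) * (psi (k+2) σ)^2 + (a^2 + b^2) * (psi k σ * psi (k+2) σ)
      + (-a^2) * (psi k σ)^2)
    (fun σ _ => by ring),
    intervalIntegral.integral_add
      (by apply Continuous.intervalIntegrable; fun_prop)
      (by apply Continuous.intervalIntegrable; fun_prop),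
    intervalIntegral.integral_add (by apply Continuous.intervalIntegrable; fun_prop)
      (by apply Continuous.intervalIntegrable; fun_prop),
    intervalIntegral.integral_const_mul, intervalIntegral.integral_const_mul,
    intervalIntegral.integral_const_mul,
    int_psi_sq (k+2) (by omega), int_psi_sq k hk, int_psi_cross k hk]
  ring

lemma int_sigma_phi_dphi (k : ℕ) (hk : 1 ≤ k) :
    ∫ σ in (-1:ℝ)..1, σ * ((psi (k+2) σ - psi k σ) * (dpsi (k+2) σ - dpsi k σ)) = -1 := by
  have c1 := psi_cont k
  have c2 := psi_cont (k+2)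
  have d1 := dpsi_cont k
  have d2 := dpsi_cont (k+2)
  have hv : ∀ x ∈ Set.uIcc (-1:ℝ) 1, HasDerivAt (fun σ => (psi (k+2) σ - psi k σ)^2/2)
      ((psi (k+2) x - psi k x) * (dpsi (k+2) x - dpsi k x)) x := by
    intro x _
    have h := (((hasDerivAt_psi (k+2) x).sub (hasDerivAt_psi k x)).pow 2).div_const 2
    refine h.congr_deriv (Eq.symm ?_)
    simp only [Pi.sub_apply]
    ring
  have hu : ∀ x ∈ Set.uIcc (-1:ℝ) 1, HasDerivAt (fun σ : ℝ => σ) ((fun _ : ℝ => (1:ℝ)) x) x :=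
    fun x _ => hasDerivAt_id x
  rw [intervalIntegral.integral_mul_deriv_eq_deriv_mul hu hv
    ((continuous_const).intervalIntegrable _ _)
    (((c2.sub c1).mul (d2.sub d1)).intervalIntegrable _ _)]
  simp only [psi_one, psi_neg_one]
  rw [intervalIntegral.integral_congr
    (g := fun σ => (1/2) * (psi (k+2) σ - psi k σ)^2) (fun σ _ => by ring),
    intervalIntegral.integral_const_mul, int_phi_sq k hk]
  norm_num

lemma int_sigma_dphi_ddphi (k : ℕ) (hk : 1 ≤ k) :
    ∫ σ in (-1:ℝ)..1, σ * ((dpsi (k+2) σ - dpsi k σ) *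
        (-(((k+2:ℕ):ℝ)*Real.pi/2)^2 * psi (k+2) σ + ((k:ℝ)*Real.pi/2)^2 * psi k σ))
      = ((k:ℝ)*Real.pi/2 + ((k+2:ℕ):ℝ)*Real.pi/2)^2
        - (((k:ℝ)*Real.pi/2)^2 + (((k+2:ℕ):ℝ)*Real.pi/2)^2)/2 := by
  have c1 := psi_cont k
  have c2 := psi_cont (k+2)
  have d1 := dpsi_cont k
  have d2 := dpsi_cont (k+2)
  have hv : ∀ x ∈ Set.uIcc (-1:ℝ) 1, HasDerivAt (fun σ => (dpsi (k+2) σ - dpsi k σ)^2/2)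
      ((dpsi (k+2) x - dpsi k x) *
        (-(((k+2:ℕ):ℝ)*Real.pi/2)^2 * psi (k+2) x + ((k:ℝ)*Real.pi/2)^2 * psi k x)) x := by
    intro x _
    have h := (((hasDerivAt_dpsi (k+2) x).sub (hasDerivAt_dpsi k x)).pow 2).div_const 2
    refine h.congr_deriv (Eq.symm ?_)
    simp only [Pi.sub_apply]
    ring
  have hu : ∀ x ∈ Set.uIcc (-1:ℝ) 1, HasDerivAt (fun σ : ℝ => σ) ((fun _ : ℝ => (1:ℝ)) x) x :=
    fun x _ => hasDerivAt_id x
  have key := intervalIntegral.integral_mul_deriv_eq_deriv_mul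
    (u := fun σ : ℝ => σ) (u' := fun _ : ℝ => (1:ℝ))
    (v := fun σ => (dpsi (k+2) σ - dpsi k σ)^2/2)
    (v' := fun x => (dpsi (k+2) x - dpsi k x) *
        (-(((k+2:ℕ):ℝ)*Real.pi/2)^2 * psi (k+2) x + ((k:ℝ)*Real.pi/2)^2 * psi k x))
    hu hv ((continuous_const).intervalIntegrable _ _)
    (by apply Continuous.intervalIntegrable; fun_prop)
  rw [key]
  rw [intervalIntegral.integral_congr
    (g := fun σ => (1/2) * (dpsi (k+2) σ - dpsi k σ)^2) (fun σ _ => by ring),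
    intervalIntegral.integral_const_mul, int_dphi_sq k hk]
  simp only [dpsi_bdry_sq k 1 (Or.inl rfl), dpsi_bdry_sq k (-1) (Or.inr rfl)]
  ring

lemma ibp_weight (h : ℝ → ℝ) (hr : ContDiff ℝ (⊤:ℕ∞) h) (hc : HasCompactSupport h) :
    ∫ y : ℝ, y * (deriv h y * h y) = -((1/2) * ∫ y : ℝ, (h y)^2) := by
  have hd : Differentiable ℝ h := hr.differentiable (by simp)
  have ch : Continuous h := hr.continuous
  have cdh : Continuous (deriv h) := hr.continuous_deriv (by exact_mod_cast le_top)
  have hu : ∀ x : ℝ, HasDerivAt (fun y : ℝ => y) ((fun _ : ℝ => (1:ℝ)) x) x :=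
    fun x => hasDerivAt_id x
  have hv : ∀ x : ℝ, HasDerivAt (fun y => h y * h y * (1/2)) ((fun y => deriv h y * h y) x) x := by
    intro x
    have := ((hd x).hasDerivAt.mul (hd x).hasDerivAt).mul_const (1/2)
    refine this.congr_deriv (Eq.symm ?_)
    ring
  have i1 : Integrable (fun y : ℝ => y * (deriv h y * h y)) :=
    (continuous_id.mul (cdh.mul ch)).integrable_of_hasCompactSupport
      ((hc.deriv.mul_right).mul_left)
  have i2 : Integrable (fun y : ℝ => (1:ℝ) * (h y * h y * (1/2))) :=
    (continuous_const.mul ((ch.mul ch).mul continuous_const)).integrable_of_hasCompactSupport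
      ((hc.mul_right.mul_right).mul_left)
  have i3 : Integrable (fun y : ℝ => y * (h y * h y * (1/2))) :=
    (continuous_id.mul ((ch.mul ch).mul continuous_const)).integrable_of_hasCompactSupport
      ((hc.mul_right.mul_right).mul_left)
  have key := MeasureTheory.integral_mul_deriv_eq_deriv_mul_of_integrable
    (u := fun y : ℝ => y) (u' := fun _ : ℝ => (1:ℝ))
    (v := fun y => h y * h y * (1/2)) (v' := fun y => deriv h y * h y)
    (fun x _ => hu x) (fun x _ => hv x) i1 i2 i3
  rw [key, MeasureTheory.integral_congr_ae (g := fun y => (1/2) * (h y)^2)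
    (Filter.Eventually.of_forall (fun y => by ring)), MeasureTheory.integral_const_mul]

lemma ibp_second (g : ℝ → ℝ) (hg : ContDiff ℝ (⊤:ℕ∞) g) (hgc : HasCompactSupport g) :
    ∫ y : ℝ, g y * deriv (deriv g) y = -∫ y : ℝ, (deriv g y)^2 := by
  have hd : Differentiable ℝ g := hg.differentiable (by simp)
  have hgd : ContDiff ℝ (⊤:ℕ∞) (deriv g) := (contDiff_infty_iff_deriv.mp hg).2
  have hdd : Differentiable ℝ (deriv g) := hgd.differentiable (by simp)
  have cg : Continuous g := hg.continuous
  have cdg : Continuous (deriv g) := hgd.continuous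
  have cddg : Continuous (deriv (deriv g)) := hgd.continuous_deriv (by exact_mod_cast le_top)
  have hu : ∀ x : ℝ, HasDerivAt g (deriv g x) x := fun x => (hd x).hasDerivAt
  have hv : ∀ x : ℝ, HasDerivAt (deriv g) (deriv (deriv g) x) x := fun x => (hdd x).hasDerivAt
  have i1 : Integrable (fun y : ℝ => g y * deriv (deriv g) y) :=
    (cg.mul cddg).integrable_of_hasCompactSupport (hgc.mul_right)
  have i2 : Integrable (fun y : ℝ => deriv g y * deriv g y) :=
    (cdg.mul cdg).integrable_of_hasCompactSupport (hgc.deriv.mul_right)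
  have i3 : Integrable (fun y : ℝ => g y * deriv g y) :=
    (cg.mul cdg).integrable_of_hasCompactSupport (hgc.mul_right)
  have key := MeasureTheory.integral_mul_deriv_eq_deriv_mul_of_integrable
    (u := g) (u' := deriv g) (v := deriv g) (v' := deriv (deriv g))
    (fun x _ => hu x) (fun x _ => hv x) i1 i2 i3
  rw [key, MeasureTheory.integral_congr_ae (g := fun y => (deriv g y)^2)
    (Filter.Eventually.of_forall (fun y => by ring))]

set_option maxHeartbeats 1000000 in
/-- for `f(y,σ) = g(y)(ψ_{k+2}(σ) − ψ_k(σ))` on `Ω = ℝ × [−1,1]`, with `g`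
smooth and compactly supported, the quadratic form of the commutator `[Δ_D, iA₁]`
evaluates to
`2∫_Ω (−Δf)(y∂_y f + σ∂_σ f + f) = 4∫ g′(y)² dy − π²k(k+2)∫ g(y)² dy`. -/
theorem statement9 (g : ℝ → ℝ) (hg : ContDiff ℝ (⊤ : ℕ∞) g) (hgc : HasCompactSupport g)
    (k : ℕ) (hk : 1 ≤ k)
    (f : ℝ → ℝ → ℝ) (hf : ∀ y σ, f y σ = g y * (psi (k + 2) σ - psi k σ)) :
    2 * (∫ y : ℝ, ∫ σ in (-1 : ℝ)..1,
        (-(dY (dY f) y σ + dS (dS f) y σ)) * (y * dY f y σ + σ * dS f y σ + f y σ))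
      = 4 * (∫ y : ℝ, (deriv g y) ^ 2)
        - Real.pi ^ 2 * k * (k + 2) * ∫ y : ℝ, (g y) ^ 2 := by
  have hgi : ContDiff ℝ (⊤:ℕ∞) g := hg.of_le (by simp)
  have hd : Differentiable ℝ g := hgi.differentiable (by simp)
  have hgd : ContDiff ℝ (⊤:ℕ∞) (deriv g) := (contDiff_infty_iff_deriv.mp hgi).2
  have hdd : Differentiable ℝ (deriv g) := hgd.differentiable (by simp)
  have cg : Continuous g := hgi.continuous
  have cdg : Continuous (deriv g) := hgd.continuous
  have cddg : Continuous (deriv (deriv g)) := hgd.continuous_deriv (by exact_mod_cast le_top)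
  have c1 := psi_cont k
  have c2 := psi_cont (k+2)
  have d1 := dpsi_cont k
  have d2 := dpsi_cont (k+2)
  -- pointwise formulas for the partial derivatives
  have hdY : ∀ y σ, dY f y σ = deriv g y * (psi (k+2) σ - psi k σ) := by
    intro y σ
    unfold dY
    rw [show (fun y' => f y' σ) = fun y' => g y' * (psi (k+2) σ - psi k σ) from
      funext fun y' => hf y' σ, deriv_mul_const (hd y)]
  have hdYY : ∀ y σ, dY (dY f) y σ = deriv (deriv g) y * (psi (k+2) σ - psi k σ) := by
    intro y σ
    show deriv (fun y' => dY f y' σ) y = _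
    rw [show (fun y' => dY f y' σ) = fun y' => deriv g y' * (psi (k+2) σ - psi k σ) from
      funext fun y' => hdY y' σ, deriv_mul_const (hdd y)]
  have hdS : ∀ y σ, dS f y σ = g y * (dpsi (k+2) σ - dpsi k σ) := by
    intro y σ
    unfold dS
    rw [show (fun σ' => f y σ') = fun σ' => g y * (psi (k+2) σ' - psi k σ') from
      funext fun σ' => hf y σ']
    exact (((hasDerivAt_psi (k+2) σ).sub (hasDerivAt_psi k σ)).const_mul (g y)).deriv
  have hdSS : ∀ y σ, dS (dS f) y σ
      = g y * (-(((k+2:ℕ):ℝ)*Real.pi/2)^2 * psi (k+2) σ + ((k:ℝ)*Real.pi/2)^2 * psi k σ) := by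
    intro y σ
    show deriv (fun σ' => dS f y σ') σ = _
    rw [show (fun σ' => dS f y σ') = fun σ' => g y * (dpsi (k+2) σ' - dpsi k σ') from
      funext fun σ' => hdS y σ',
      (show HasDerivAt (fun σ' => g y * (dpsi (k+2) σ' - dpsi k σ')) _ σ from
        ((hasDerivAt_dpsi (k+2) σ).sub (hasDerivAt_dpsi k σ)).const_mul (g y)).deriv]
    ring
  -- the inner (transverse) integral
  have hinner : ∀ y : ℝ, (∫ σ in (-1 : ℝ)..1,
      (-(dY (dY f) y σ + dS (dS f) y σ)) * (y * dY f y σ + σ * dS f y σ + f y σ))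
      = (-(y * (deriv (deriv g) y * deriv g y) + deriv (deriv g) y * g y)) * 2
        + (-(deriv (deriv g) y * g y)) * (-1)
        + (-(y * (deriv g y * g y) + g y * g y))
            * (-(((k:ℝ)*Real.pi/2)^2 + (((k+2:ℕ):ℝ)*Real.pi/2)^2))
        + (-(g y * g y)) * (((k:ℝ)*Real.pi/2 + ((k+2:ℕ):ℝ)*Real.pi/2)^2
            - (((k:ℝ)*Real.pi/2)^2 + (((k+2:ℕ):ℝ)*Real.pi/2)^2)/2) := by
    intro y
    have hcong : ∀ σ ∈ Set.uIcc (-1:ℝ) 1,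
        (-(dY (dY f) y σ + dS (dS f) y σ)) * (y * dY f y σ + σ * dS f y σ + f y σ)
        = (-(y * (deriv (deriv g) y * deriv g y) + deriv (deriv g) y * g y))
              * (psi (k+2) σ - psi k σ)^2
          + (-(deriv (deriv g) y * g y))
              * (σ * ((psi (k+2) σ - psi k σ) * (dpsi (k+2) σ - dpsi k σ)))
          + (-(y * (deriv g y * g y) + g y * g y))
              * ((psi (k+2) σ - psi k σ) *
                (-(((k+2:ℕ):ℝ)*Real.pi/2)^2 * psi (k+2) σ + ((k:ℝ)*Real.pi/2)^2 * psi k σ))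
          + (-(g y * g y))
              * (σ * ((dpsi (k+2) σ - dpsi k σ) *
                (-(((k+2:ℕ):ℝ)*Real.pi/2)^2 * psi (k+2) σ + ((k:ℝ)*Real.pi/2)^2 * psi k σ))) := by
      intro σ _
      rw [hdY, hdYY, hdS, hdSS, hf]
      ring
    rw [intervalIntegral.integral_congr hcong]
    have j1 : IntervalIntegrable (fun σ =>
        (-(y * (deriv (deriv g) y * deriv g y) + deriv (deriv g) y * g y))
          * (psi (k+2) σ - psi k σ)^2) volume (-1) 1 :=
      (continuous_const.mul ((c2.sub c1).pow 2)).intervalIntegrable _ _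
    have j2 : IntervalIntegrable (fun σ =>
        (-(deriv (deriv g) y * g y))
          * (σ * ((psi (k+2) σ - psi k σ) * (dpsi (k+2) σ - dpsi k σ)))) volume (-1) 1 :=
      (continuous_const.mul (continuous_id.mul ((c2.sub c1).mul (d2.sub d1)))).intervalIntegrable _ _
    have j3 : IntervalIntegrable (fun σ =>
        (-(y * (deriv g y * g y) + g y * g y))
          * ((psi (k+2) σ - psi k σ) *
            (-(((k+2:ℕ):ℝ)*Real.pi/2)^2 * psi (k+2) σ + ((k:ℝ)*Real.pi/2)^2 * psi k σ)))
        volume (-1) 1 :=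
      (continuous_const.mul ((c2.sub c1).mul
        ((continuous_const.mul c2).add (continuous_const.mul c1)))).intervalIntegrable _ _
    have j4 : IntervalIntegrable (fun σ =>
        (-(g y * g y))
          * (σ * ((dpsi (k+2) σ - dpsi k σ) *
            (-(((k+2:ℕ):ℝ)*Real.pi/2)^2 * psi (k+2) σ + ((k:ℝ)*Real.pi/2)^2 * psi k σ))))
        volume (-1) 1 :=
      (continuous_const.mul (continuous_id.mul ((d2.sub d1).mul
        ((continuous_const.mul c2).add (continuous_const.mul c1))))).intervalIntegrable _ _
    rw [intervalIntegral.integral_add ((j1.add j2).add j3) j4,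
      intervalIntegral.integral_add (j1.add j2) j3,
      intervalIntegral.integral_add j1 j2,
      intervalIntegral.integral_const_mul, intervalIntegral.integral_const_mul,
      intervalIntegral.integral_const_mul, intervalIntegral.integral_const_mul,
      int_phi_sq k hk, int_sigma_phi_dphi k hk, int_phi_ddphi k hk,
      int_sigma_dphi_ddphi k hk]
  simp only [hinner]
  -- the outer (longitudinal) integral
  rw [MeasureTheory.integral_congr_ae (g := fun y =>
      (-2) * (y * (deriv (deriv g) y * deriv g y))
      + (-1) * (g y * deriv (deriv g) y)
      + ((((k:ℝ)*Real.pi/2)^2 + (((k+2:ℕ):ℝ)*Real.pi/2)^2)) * (y * (deriv g y * g y))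
      + ((((k:ℝ)*Real.pi/2)^2 + (((k+2:ℕ):ℝ)*Real.pi/2)^2)
          - (((k:ℝ)*Real.pi/2 + ((k+2:ℕ):ℝ)*Real.pi/2)^2
            - (((k:ℝ)*Real.pi/2)^2 + (((k+2:ℕ):ℝ)*Real.pi/2)^2)/2)) * ((g y)^2))
    (Filter.Eventually.of_forall (fun y => by ring))]
  have b1 : Integrable (fun y : ℝ => y * (deriv (deriv g) y * deriv g y)) :=
    (continuous_id.mul (cddg.mul cdg)).integrable_of_hasCompactSupport
      ((hgc.deriv.deriv.mul_right).mul_left)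
  have b2 : Integrable (fun y : ℝ => g y * deriv (deriv g) y) :=
    (cg.mul cddg).integrable_of_hasCompactSupport (hgc.mul_right)
  have b3 : Integrable (fun y : ℝ => y * (deriv g y * g y)) :=
    (continuous_id.mul (cdg.mul cg)).integrable_of_hasCompactSupport
      ((hgc.deriv.mul_right).mul_left)
  have b4 : Integrable (fun y : ℝ => (g y)^2) :=
    (cg.pow 2).integrable_of_hasCompactSupport
      (hgc.comp_left (g := fun x : ℝ => x^2) (by norm_num) :)
  set A1 : ℝ := ((((k:ℝ)*Real.pi/2)^2 + (((k+2:ℕ):ℝ)*Real.pi/2)^2)) with hA1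
  set A2 : ℝ := ((((k:ℝ)*Real.pi/2)^2 + (((k+2:ℕ):ℝ)*Real.pi/2)^2)
          - (((k:ℝ)*Real.pi/2 + ((k+2:ℕ):ℝ)*Real.pi/2)^2
            - (((k:ℝ)*Real.pi/2)^2 + (((k+2:ℕ):ℝ)*Real.pi/2)^2)/2)) with hA2
  have i1 : Integrable (fun y : ℝ => (-2) * (y * (deriv (deriv g) y * deriv g y))) :=
    b1.const_mul _
  have i2 : Integrable (fun y : ℝ => (-1) * (g y * deriv (deriv g) y)) := b2.const_mul _
  have i3 : Integrable (fun y : ℝ => A1 * (y * (deriv g y * g y))) := b3.const_mul _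
  have i4 : Integrable (fun y : ℝ => A2 * ((g y)^2)) := b4.const_mul _
  have i12 : Integrable (fun y : ℝ => (-2) * (y * (deriv (deriv g) y * deriv g y))
      + (-1) * (g y * deriv (deriv g) y)) := i1.add i2
  have i123 : Integrable (fun y : ℝ => (-2) * (y * (deriv (deriv g) y * deriv g y))
      + (-1) * (g y * deriv (deriv g) y) + A1 * (y * (deriv g y * g y))) := i12.add i3
  rw [MeasureTheory.integral_add i123 i4,
    MeasureTheory.integral_add i12 i3,
    MeasureTheory.integral_add i1 i2,
    MeasureTheory.integral_const_mul, MeasureTheory.integral_const_mul,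
      MeasureTheory.integral_const_mul, MeasureTheory.integral_const_mul,
    ibp_weight (deriv g) hgd hgc.deriv, ibp_second g hgi hgc, ibp_weight g hgi hgc]
  rw [hA1, hA2]
  push_cast
  ring
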